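/- Characterization of epicness (Lemma 3.9): every element of Λ_{A,B} is epic if and only if B satisfies Condition (E). Precisely, the following are equivalent: (1) for all a, b, c ∈ M, if b·a = c·a and b·a ≠ 0 then b = c; (2) for all i, j ∈ ι, B i j = 0 if and only if A i j = 0 (equivalently, given Condition (0): B i j ≠ 0 whenever 1 ≤ A i j). -/

import Mathlib

/-- The alphabet of generators for the semigroupoid `Λ_{A,B}`: a zero letter `z`,
letters `h i` for `i : ι`, and letters `g i j _ n` for pairs with `1 ≤ A i j` and `n : ℤ`. -/
inductive Letter (ι : Type) (A : ι → ι → ℕ) : Type where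
  | z : Letter ι A
  | h : ι → Letter ι A
  | g : (i j : ι) → 1 ≤ A i j → ℤ → Letter ι A

/-- The defining relations of `Λ_{A,B}` (as a monoid congruence generator) on the free
monoid over `Letter ι A`. -/
inductive KatRel (ι : Type) (A : ι → ι → ℕ) (B : ι → ι → ℤ) :
    FreeMonoid (Letter ι A) → FreeMonoid (Letter ι A) → Prop where
  | zl (w : Letter ι A) :
      KatRel ι A B (FreeMonoid.of Letter.z * FreeMonoid.of w) (FreeMonoid.of Letter.z)
  | zr (w : Letter ι A) :
      KatRel ι A B (FreeMonoid.of w * FreeMonoid.of Letter.z) (FreeMonoid.of Letter.z)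
  | gh (i j : ι) (hij : 1 ≤ A i j) (n : ℤ) :
      KatRel ι A B (FreeMonoid.of (Letter.g i j hij n) * FreeMonoid.of (Letter.h j))
        (FreeMonoid.of (Letter.g i j hij (n + A i j)))
  | hg (i j : ι) (hij : 1 ≤ A i j) (n : ℤ) :
      KatRel ι A B (FreeMonoid.of (Letter.h i) * FreeMonoid.of (Letter.g i j hij n))
        (FreeMonoid.of (Letter.g i j hij (n + B i j)))
  | hh (i j : ι) (hne : i ≠ j) :
      KatRel ι A B (FreeMonoid.of (Letter.h i) * FreeMonoid.of (Letter.h j))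
        (FreeMonoid.of Letter.z)
  | hg' (i i' j : ι) (hij : 1 ≤ A i' j) (n : ℤ) (hne : i ≠ i') :
      KatRel ι A B (FreeMonoid.of (Letter.h i) * FreeMonoid.of (Letter.g i' j hij n))
        (FreeMonoid.of Letter.z)
  | gh' (i j k : ι) (hij : 1 ≤ A i j) (n : ℤ) (hne : j ≠ k) :
      KatRel ι A B (FreeMonoid.of (Letter.g i j hij n) * FreeMonoid.of (Letter.h k))
        (FreeMonoid.of Letter.z)
  | gg (i j j' l : ι) (hij : 1 ≤ A i j) (hjl : 1 ≤ A j' l) (n m : ℤ) (hne : j ≠ j') :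
      KatRel ι A B (FreeMonoid.of (Letter.g i j hij n) * FreeMonoid.of (Letter.g j' l hjl m))
        (FreeMonoid.of Letter.z)

/-- The congruence generated by the defining relations. -/
def KatCon (ι : Type) (A : ι → ι → ℕ) (B : ι → ι → ℤ) : Con (FreeMonoid (Letter ι A)) :=
  conGen (KatRel ι A B)

/-- The quotient monoid `M`. -/
abbrev KatM (ι : Type) (A : ι → ι → ℕ) (B : ι → ι → ℤ) : Type :=
  (KatCon ι A B).Quotient

/-- The quotient map `F → M`. -/
def KatQ (ι : Type) (A : ι → ι → ℕ) (B : ι → ι → ℤ) :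
    FreeMonoid (Letter ι A) →* KatM ι A B :=
  (KatCon ι A B).mk'

/-- The zero element of `M`: the class of the letter `z`. -/
def zeroM (ι : Type) (A : ι → ι → ℕ) (B : ι → ι → ℤ) : KatM ι A B :=
  KatQ ι A B (FreeMonoid.of Letter.z)

/-- The word `g(i₁,i₂,n₁)·g(i₂,i₃,n₂)⋯g(i_k,i_{k+1},n_k)` in the free monoid. -/
def gwordF (ι : Type) (A : ι → ι → ℕ) (k : ℕ) (i : Fin (k + 1) → ι)
    (hA : ∀ t : Fin k, 1 ≤ A (i t.castSucc) (i t.succ)) (n : Fin k → ℤ) :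
    FreeMonoid (Letter ι A) :=
  (List.ofFn fun t : Fin k =>
    FreeMonoid.of (Letter.g (i t.castSucc) (i t.succ) (hA t) (n t))).prod

set_option linter.unusedSectionVars false

namespace KatAux

variable {ι : Type} [DecidableEq ι] (A : ι → ι → ℕ) (B : ι → ι → ℤ)

variable {ι : Type} [DecidableEq ι] (A : ι → ι → ℕ) (B : ι → ι → ℤ)

/-- bump first coordinate -/
def bf (d : ℤ) : List (ι × ℤ) → List (ι × ℤ)
  | [] => []
  | (j, n) :: t => (j, n + d) :: t

/-- bump last coordinate -/
def bl (d : ℤ) : List (ι × ℤ) → List (ι × ℤ)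
  | [] => []
  | [(j, n)] => [(j, n + d)]
  | e :: e' :: t => e :: bl d (e' :: t)

/-- final vertex of a chain -/
def endv (s : ι) (l : List (ι × ℤ)) : ι := l.foldl (fun _ p => p.1) s

/-- normalization of a chain starting at `s` -/
def norm (s : ι) : List (ι × ℤ) → List (ι × ℤ)
  | [] => []
  | [e] => [e]
  | (j, n) :: e :: t =>
      (j, n % (A s j : ℤ)) :: norm j ((e.1, e.2 + (n / (A s j : ℤ)) * B j e.1) :: t)
  termination_by l => l.length

def validL : ι → List (ι × ℤ) → Prop
  | _, [] => True
  | s, (j, _) :: t => 1 ≤ A s j ∧ validL j t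

@[simp] lemma bf_nil (d : ℤ) : bf d ([] : List (ι × ℤ)) = [] := rfl
@[simp] lemma bf_cons (d : ℤ) (j : ι) (n : ℤ) (t : List (ι × ℤ)) :
    bf d ((j, n) :: t) = (j, n + d) :: t := rfl
@[simp] lemma bl_nil (d : ℤ) : bl d ([] : List (ι × ℤ)) = [] := rfl
@[simp] lemma bl_single (d : ℤ) (j : ι) (n : ℤ) : bl d [(j, n)] = [(j, n + d)] := rfl
lemma bl_cons (d : ℤ) (e : ι × ℤ) {t : List (ι × ℤ)} (ht : t ≠ []) :
    bl d (e :: t) = e :: bl d t := by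
  cases t with
  | nil => exact absurd rfl ht
  | cons e' t => rfl

@[simp] lemma norm_nil (s : ι) : norm A B s [] = [] := by simp [norm]
@[simp] lemma norm_single (s : ι) (e : ι × ℤ) : norm A B s [e] = [e] := by simp [norm]
lemma norm_cons₂ (s j : ι) (n : ℤ) (e : ι × ℤ) (t : List (ι × ℤ)) :
    norm A B s ((j, n) :: e :: t) =
      (j, n % (A s j : ℤ)) :: norm A B j ((e.1, e.2 + (n / (A s j : ℤ)) * B j e.1) :: t) := by
  rw [norm]

@[simp] lemma bf_map_fst (d : ℤ) (l : List (ι × ℤ)) :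
    (bf d l).map Prod.fst = l.map Prod.fst := by
  cases l with
  | nil => rfl
  | cons e t => cases e; rfl

lemma bl_map_fst (d : ℤ) (l : List (ι × ℤ)) :
    (bl d l).map Prod.fst = l.map Prod.fst := by
  induction l with
  | nil => rfl
  | cons e t ih =>
    cases t with
    | nil => cases e; rfl
    | cons e' t' => rw [bl_cons d e (by simp)]; simp_all

lemma norm_map_fst (s : ι) (l : List (ι × ℤ)) :
    (norm A B s l).map Prod.fst = l.map Prod.fst := by
  induction s, l using norm.induct A B with
  | case1 s => simp
  | case2 s e => simp
  | case3 s j n e t ih => rw [norm_cons₂]; simpa using ih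

lemma norm_length (s : ι) (l : List (ι × ℤ)) : (norm A B s l).length = l.length := by
  have := congrArg List.length (norm_map_fst A B s l)
  simpa using this

lemma norm_ne_nil (s : ι) {l : List (ι × ℤ)} (hl : l ≠ []) : norm A B s l ≠ [] := by
  intro h
  apply hl
  have := norm_length A B s l
  rw [h] at this
  exact List.length_eq_zero_iff.mp this.symm

lemma bf_ne_nil (d : ℤ) {l : List (ι × ℤ)} (hl : l ≠ []) : bf d l ≠ [] := by
  cases l with
  | nil => exact absurd rfl hl
  | cons e t => cases e; simp [bf]

@[simp] lemma bf_bf (a b : ℤ) (l : List (ι × ℤ)) : bf a (bf b l) = bf (b + a) l := by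
  cases l with
  | nil => rfl
  | cons e t => cases e; simp [bf, add_assoc]

@[simp] lemma bf_zero (l : List (ι × ℤ)) : bf 0 l = l := by
  cases l with
  | nil => rfl
  | cons e t => cases e; simp [bf]

lemma bf_length (d : ℤ) (l : List (ι × ℤ)) : (bf d l).length = l.length := by
  cases l with
  | nil => rfl
  | cons e t => cases e; rfl

lemma bl_length (d : ℤ) (l : List (ι × ℤ)) : (bl d l).length = l.length := by
  have := congrArg List.length (bl_map_fst d l)
  simpa using this

lemma bl_ne_nil (d : ℤ) {l : List (ι × ℤ)} (hl : l ≠ []) : bl d l ≠ [] := by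
  intro h
  apply hl
  have := bl_length d l
  rw [h] at this
  exact List.length_eq_zero_iff.mp this.symm

lemma bl_bl (a b : ℤ) (l : List (ι × ℤ)) : bl a (bl b l) = bl (b + a) l := by
  induction l with
  | nil => rfl
  | cons e t ih =>
    cases t with
    | nil => cases e; simp [bl, add_assoc]
    | cons e' t' =>
      rw [bl_cons b e (by simp), bl_cons a e (bl_ne_nil b (by simp)),
        bl_cons (b+a) e (by simp)]
      · rw [ih]

@[simp] lemma bl_zero (l : List (ι × ℤ)) : bl 0 l = l := by
  induction l with
  | nil => rfl
  | cons e t ih =>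
    cases t with
    | nil => cases e; simp [bl]
    | cons e' t' => rw [bl_cons 0 e (by simp), ih]

lemma bf_bl_comm (a b : ℤ) (l : List (ι × ℤ)) : bf a (bl b l) = bl b (bf a l) := by
  cases l with
  | nil => rfl
  | cons e t =>
    cases e with
    | mk j n =>
      cases t with
      | nil => simp [bl, bf]; ring
      | cons e' t' =>
        rw [bl_cons b (j,n) (by simp), bf_cons, bf_cons, bl_cons b (j, n+a) (by simp)]

lemma bf_append (d : ℤ) {l : List (ι × ℤ)} (hl : l ≠ []) (l' : List (ι × ℤ)) :
    bf d (l ++ l') = bf d l ++ l' := by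
  cases l with
  | nil => exact absurd rfl hl
  | cons e t => cases e; simp [bf]

lemma bl_append (d : ℤ) (l : List (ι × ℤ)) {l' : List (ι × ℤ)} (hl : l' ≠ []) :
    bl d (l ++ l') = l ++ bl d l' := by
  induction l with
  | nil => simp
  | cons e t ih =>
    rw [List.cons_append, bl_cons d e (by simp [hl]), ih, List.cons_append]

@[simp] lemma endv_nil (s : ι) : endv s ([] : List (ι × ℤ)) = s := rfl
@[simp] lemma endv_cons (s : ι) (e : ι × ℤ) (t : List (ι × ℤ)) :
    endv s (e :: t) = endv e.1 t := rfl

lemma endv_eq_getLastD (s : ι) (l : List (ι × ℤ)) :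
    endv s l = (l.map Prod.fst).getLastD s := by
  induction l generalizing s with
  | nil => rfl
  | cons e t ih => rw [endv_cons, ih, List.map_cons, List.getLastD_cons]

lemma endv_congr {s : ι} {l l' : List (ι × ℤ)} (h : l.map Prod.fst = l'.map Prod.fst) :
    endv s l = endv s l' := by
  rw [endv_eq_getLastD, endv_eq_getLastD, h]

lemma endv_append (s : ι) (l l' : List (ι × ℤ)) :
    endv s (l ++ l') = endv (endv s l) l' := by
  simp [endv, List.foldl_append]

/-- head vertex of a chain list with default -/
def hv : List (ι × ℤ) → ι → ι
  | [], d => d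
  | (j, _) :: _, _ => j

@[simp] lemma hv_cons (j : ι) (n : ℤ) (t : List (ι × ℤ)) (d : ι) : hv ((j,n) :: t) d = j := rfl

lemma hv_congr {l l' : List (ι × ℤ)} (h : l.map Prod.fst = l'.map Prod.fst) (d : ι) :
    hv l d = hv l' d := by
  cases l with
  | nil => cases l' with
    | nil => rfl
    | cons e t => simp at h
  | cons e t => cases l' with
    | nil => simp at h
    | cons e' t' =>
      cases e; cases e'
      simp at h
      simp [hv, h.1]

lemma norm_cons (s j : ι) (m : ℤ) {Y : List (ι × ℤ)} (hY : Y ≠ []) :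
    norm A B s ((j, m) :: Y) =
      (j, m % (A s j : ℤ)) :: norm A B j (bf ((m / (A s j : ℤ)) * B j (hv Y j)) Y) := by
  cases Y with
  | nil => exact absurd rfl hY
  | cons e t =>
    cases e
    rw [norm_cons₂]
    simp [hv, bf]
lemma key_mod (n d : ℤ) (c : ℕ) : (n % (c:ℤ) + d) % (c:ℤ) = (n + d) % (c:ℤ) :=
  Int.emod_add_emod n (c:ℤ) d

lemma key_div (n d : ℤ) (c : ℕ) : (n % (c:ℤ) + d) / (c:ℤ) + n / (c:ℤ) = (n + d) / (c:ℤ) := by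
  rcases eq_or_ne (c:ℤ) 0 with hc | hc
  · simp [hc]
  · have h1 : (n % (c:ℤ) + d) + (n / (c:ℤ)) * (c:ℤ) = n + d := by
      have := Int.mul_ediv_add_emod n (c:ℤ)
      linarith
    rw [← h1, Int.add_mul_ediv_right _ _ hc]

lemma nmod_mod (n : ℤ) (c : ℕ) : (n % (c:ℤ)) % (c:ℤ) = n % (c:ℤ) :=
  Int.emod_emod_of_dvd _ dvd_rfl

lemma nmod_div (n : ℤ) (c : ℕ) : (n % (c:ℤ)) / (c:ℤ) = 0 := by
  rcases Nat.eq_zero_or_pos c with hc | hc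
  · simp [hc]
  · have hpos : (0:ℤ) < c := by exact_mod_cast hc
    exact Int.ediv_eq_zero_of_lt (Int.emod_nonneg n (by positivity)) (Int.emod_lt_of_pos n hpos)

lemma norm_bf_norm (s : ι) (l : List (ι × ℤ)) :
    ∀ d, norm A B s (bf d (norm A B s l)) = norm A B s (bf d l) := by
  induction s, l using norm.induct A B with
  | case1 s => intro d; simp
  | case2 s e => intro d; cases e; simp
  | case3 s j n e t ih =>
    intro d
    obtain ⟨j₂, m⟩ := e
    dsimp only at ih ⊢
    rw [norm_cons₂, bf_cons, bf_cons,
        norm_cons A B s j (n % (A s j : ℤ) + d) (norm_ne_nil A B j (by simp)),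
        norm_cons₂]
    have hhv : hv (norm A B j ((j₂, m + n / (A s j:ℤ) * B j j₂) :: t)) j = j₂ := by
      rw [hv_congr (norm_map_fst A B j _) j]; rfl
    rw [hhv, ih, key_mod]
    congr 1
    rw [bf_cons]
    have hk := key_div n d (A s j)
    congr 2
    rw [← hk]
    ring

lemma norm_norm_append (s : ι) (l₁ : List (ι × ℤ)) :
    ∀ l₂, norm A B s (norm A B s l₁ ++ l₂) = norm A B s (l₁ ++ l₂) := by
  induction s, l₁ using norm.induct A B with
  | case1 s => intro l₂; simp
  | case2 s e => intro l₂; cases e; simp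
  | case3 s j n e t ih =>
    intro l₂
    obtain ⟨j₂, m⟩ := e
    dsimp only at ih ⊢
    have hne : norm A B j ((j₂, m + n / (A s j:ℤ) * B j j₂) :: t) ++ l₂ ≠ [] := by
      simp [norm_ne_nil A B j (List.cons_ne_nil _ _)]
    conv_rhs => rw [List.cons_append, List.cons_append, norm_cons₂]
    conv_lhs => rw [norm_cons₂, List.cons_append,
      norm_cons A B s j (n % (A s j : ℤ)) hne]
    rw [nmod_mod, nmod_div, zero_mul, bf_zero, ih, List.cons_append]

lemma norm_norm (s : ι) (l : List (ι × ℤ)) : norm A B s (norm A B s l) = norm A B s l := by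
  have := norm_norm_append A B s l []
  simpa using this

lemma norm_bl (s : ι) (l : List (ι × ℤ)) :
    ∀ d, norm A B s (bl d l) = bl d (norm A B s l) := by
  induction s, l using norm.induct A B with
  | case1 s => intro d; simp
  | case2 s e => intro d; cases e; simp
  | case3 s j n e t ih =>
    intro d
    obtain ⟨j₂, m⟩ := e
    dsimp only at ih ⊢
    cases t with
    | nil =>
      have harith : m + d + n / (A s j:ℤ) * B j j₂ = m + n / (A s j:ℤ) * B j j₂ + d := by ring
      simp [bl, norm_cons₂, harith]
    | cons e₃ t₃ =>
      rw [bl_cons d (j,n) (by simp), bl_cons d (j₂,m) (by simp), norm_cons₂, norm_cons₂,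
          bl_cons d (j, n % (A s j:ℤ)) (norm_ne_nil A B j (by simp)), ← ih,
          bl_cons d (j₂, m + n / (A s j:ℤ) * B j j₂) (by simp)]

lemma norm_cons_norm (s j : ι) (n : ℤ) {X : List (ι × ℤ)} (hX : X ≠ []) :
    norm A B s ((j, n) :: norm A B j X) = norm A B s ((j, n) :: X) := by
  rw [norm_cons A B s j n (norm_ne_nil A B j hX), norm_cons A B s j n hX,
      hv_congr (norm_map_fst A B j X) j, norm_bf_norm]
@[simp] lemma validL_nil (s : ι) : validL A s [] := trivial
@[simp] lemma validL_cons (s j : ι) (n : ℤ) (t : List (ι × ℤ)) :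
    validL A s ((j, n) :: t) ↔ 1 ≤ A s j ∧ validL A j t := Iff.rfl

lemma validL_congr {s : ι} {l l' : List (ι × ℤ)} (h : l.map Prod.fst = l'.map Prod.fst) :
    validL A s l ↔ validL A s l' := by
  induction l generalizing l' s with
  | nil =>
    cases l' with
    | nil => exact Iff.rfl
    | cons e t => simp at h
  | cons e t ih =>
    cases l' with
    | nil => simp at h
    | cons e' t' =>
      obtain ⟨j, n⟩ := e; obtain ⟨j', n'⟩ := e'
      simp only [List.map_cons, List.cons.injEq] at h
      obtain ⟨rfl, h2⟩ := h
      simp [ih h2]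

lemma validL_append {s : ι} {l l' : List (ι × ℤ)} :
    validL A s (l ++ l') ↔ validL A s l ∧ validL A (endv s l) l' := by
  induction l generalizing s with
  | nil => simp
  | cons e t ih =>
    obtain ⟨j, n⟩ := e
    simp [ih, and_assoc]

lemma validL_norm {s : ι} (l : List (ι × ℤ)) :
    validL A s (norm A B s l) ↔ validL A s l :=
  validL_congr A (norm_map_fst A B s l)

lemma validL_bf {s : ι} (d : ℤ) (l : List (ι × ℤ)) :
    validL A s (bf d l) ↔ validL A s l :=
  validL_congr A (bf_map_fst d l)

lemma validL_bl {s : ι} (d : ℤ) (l : List (ι × ℤ)) :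
    validL A s (bl d l) ↔ validL A s l :=
  validL_congr A (bl_map_fst d l)

@[simp] lemma hv_bf (d : ℤ) (l : List (ι × ℤ)) (c : ι) : hv (bf d l) c = hv l c := by
  cases l with
  | nil => rfl
  | cons e t => cases e; rfl

@[simp] lemma hv_norm (s : ι) (l : List (ι × ℤ)) (c : ι) : hv (norm A B s l) c = hv l c :=
  hv_congr (norm_map_fst A B s l) c

@[simp] lemma hv_bl (d : ℤ) (l : List (ι × ℤ)) (c : ι) : hv (bl d l) c = hv l c :=
  hv_congr (bl_map_fst d l) c

lemma hv_append {l : List (ι × ℤ)} (hl : l ≠ []) (l' : List (ι × ℤ)) (c : ι) :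
    hv (l ++ l') c = hv l c := by
  cases l with
  | nil => exact absurd rfl hl
  | cons e t => cases e; rfl

@[simp] lemma endv_bf (s : ι) (d : ℤ) (l : List (ι × ℤ)) : endv s (bf d l) = endv s l :=
  endv_congr (bf_map_fst d l)

@[simp] lemma endv_norm (s s' : ι) (l : List (ι × ℤ)) : endv s (norm A B s' l) = endv s l :=
  endv_congr (norm_map_fst A B s' l)

@[simp] lemma endv_bl (s : ι) (d : ℤ) (l : List (ι × ℤ)) : endv s (bl d l) = endv s l :=
  endv_congr (bl_map_fst d l)

/-- the next-to-last vertex of a chain -/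
def pen (s : ι) (l : List (ι × ℤ)) : ι := endv s l.dropLast

lemma pen_congr {s : ι} {l l' : List (ι × ℤ)} (h : l.map Prod.fst = l'.map Prod.fst) :
    pen s l = pen s l' := by
  unfold pen
  rw [endv_eq_getLastD, endv_eq_getLastD, List.map_dropLast, List.map_dropLast, h]

@[simp] lemma pen_bf (s : ι) (d : ℤ) (l : List (ι × ℤ)) : pen s (bf d l) = pen s l :=
  pen_congr (bf_map_fst d l)

@[simp] lemma pen_norm (s s' : ι) (l : List (ι × ℤ)) : pen s (norm A B s' l) = pen s l :=
  pen_congr (norm_map_fst A B s' l)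

@[simp] lemma pen_bl (s : ι) (d : ℤ) (l : List (ι × ℤ)) : pen s (bl d l) = pen s l :=
  pen_congr (bl_map_fst d l)

lemma pen_cons (i : ι) (e : ι × ℤ) {u : List (ι × ℤ)} (hu : u ≠ []) :
    pen i (e :: u) = pen e.1 u := by
  unfold pen
  rw [List.dropLast_cons_of_ne_nil hu, endv_cons]

/-- The normal-form carrier. -/
inductive NN (ι : Type) : Type where
  | zero : NN ι
  | one : NN ι
  | hp (i : ι) (p : ℕ) : NN ι
  | ch (s : ι) (l : List (ι × ℤ)) : NN ι

/-- Multiplication of normal forms. -/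
def Nmul : NN ι → NN ι → NN ι
  | .zero, _ => .zero
  | .one, y => y
  | .hp i p, y =>
    match y with
    | .zero => .zero
    | .one => .hp i p
    | .hp j q => if i = j then .hp i (p + q + 1) else .zero
    | .ch s l =>
        if i = s then .ch s (norm A B s (bf (((p : ℤ) + 1) * B s (hv l s)) l)) else .zero
  | .ch t u, y =>
    match y with
    | .zero => .zero
    | .one => .ch t u
    | .hp j q =>
        if endv t u = j then
          .ch t (norm A B t (bl (((q : ℤ) + 1) * (A (pen t u) (endv t u) : ℤ)) u))
        else .zero
    | .ch s l => if endv t u = s then .ch t (norm A B t (u ++ l)) else .zero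

@[simp] lemma Nmul_zero_left (y : NN ι) : Nmul A B .zero y = .zero := rfl
@[simp] lemma Nmul_one_left (y : NN ι) : Nmul A B .one y = y := rfl
@[simp] lemma Nmul_zero_right (x : NN ι) : Nmul A B x .zero = .zero := by cases x <;> rfl
@[simp] lemma Nmul_one_right (x : NN ι) : Nmul A B x .one = x := by cases x <;> rfl
lemma Nmul_hp_hp (i : ι) (p : ℕ) (j : ι) (q : ℕ) :
    Nmul A B (.hp i p) (.hp j q) = if i = j then .hp i (p + q + 1) else .zero := rfl
lemma Nmul_hp_ch (i : ι) (p : ℕ) (s : ι) (l : List (ι × ℤ)) :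
    Nmul A B (.hp i p) (.ch s l) =
      if i = s then .ch s (norm A B s (bf (((p : ℤ) + 1) * B s (hv l s)) l)) else .zero := rfl
lemma Nmul_ch_hp (t : ι) (u : List (ι × ℤ)) (j : ι) (q : ℕ) :
    Nmul A B (.ch t u) (.hp j q) =
      if endv t u = j then
        .ch t (norm A B t (bl (((q : ℤ) + 1) * (A (pen t u) (endv t u) : ℤ)) u))
      else .zero := rfl
lemma Nmul_ch_ch (t : ι) (u : List (ι × ℤ)) (s : ι) (l : List (ι × ℤ)) :
    Nmul A B (.ch t u) (.ch s l) =
      if endv t u = s then .ch t (norm A B t (u ++ l)) else .zero := rfl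
def GoodN : NN ι → Prop
  | .ch _ l => l ≠ []
  | _ => True

lemma g_bump (i j : ι) (n : ℤ) (hAne : (A i j : ℤ) ≠ 0) (q : ℤ) {l : List (ι × ℤ)}
    (hl : l ≠ []) :
    norm A B i ((j, n + q * (A i j : ℤ)) :: l) =
      norm A B i ((j, n) :: bf (q * B j (hv l j)) l) := by
  cases l with
  | nil => exact absurd rfl hl
  | cons e t =>
    obtain ⟨j₂, m⟩ := e
    rw [hv_cons, bf_cons, norm_cons₂, norm_cons₂,
      show (n + q * (A i j : ℤ)) % (A i j : ℤ) = n % (A i j : ℤ) from Int.add_mul_emod_self_right _ _ _,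
      show ((n + q * (A i j : ℤ)) / (A i j : ℤ)) = n / (A i j : ℤ) + q from
        Int.add_mul_ediv_right n q hAne,
      show m + (n / (A i j:ℤ) + q) * B j j₂ = m + q * B j j₂ + n / (A i j:ℤ) * B j j₂ by ring]

lemma hp_assoc (i : ι) (p : ℕ) (x y : NN ι) (hx : GoodN x) (hy : GoodN y) :
    Nmul A B (.hp i p) (Nmul A B x y) = Nmul A B (Nmul A B (.hp i p) x) y := by
  cases x with
  | zero => simp
  | one => simp
  | hp j q =>
    cases y with
    | zero => simp
    | one => simp
    | hp k r =>
      rcases eq_or_ne i j with rfl | h1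
      · rcases eq_or_ne i k with rfl | h2
        · simp [Nmul_hp_hp]; omega
        · simp [Nmul_hp_hp, h2]
      · rcases eq_or_ne j k with rfl | h2
        · simp [Nmul_hp_hp, h1]
        · simp [Nmul_hp_hp, h1, h2]
    | ch s l =>
      rcases eq_or_ne i j with rfl | h1
      · rcases eq_or_ne i s with rfl | h2
        · simp [Nmul_hp_hp, Nmul_hp_ch]
          rw [norm_bf_norm, bf_bf]
          congr 2
          push_cast
          ring
        · simp [Nmul_hp_hp, Nmul_hp_ch, h2]
      · rcases eq_or_ne j s with rfl | h2
        · simp [Nmul_hp_hp, Nmul_hp_ch, h1]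
        · simp [Nmul_hp_hp, Nmul_hp_ch, h1, h2]
  | ch t u =>
    replace hx : u ≠ [] := hx
    cases y with
    | zero => simp
    | one => simp
    | hp k r =>
      rcases eq_or_ne i t with rfl | h2
      · rcases eq_or_ne (endv i u) k with h1 | h1
        · simp [Nmul_ch_hp, Nmul_hp_ch, h1]
          rw [norm_bf_norm, bf_bl_comm, norm_bl, norm_bl, norm_norm]
        · simp [Nmul_ch_hp, Nmul_hp_ch, h1]
      · rcases eq_or_ne (endv t u) k with h1 | h1 <;>
          simp [Nmul_ch_hp, Nmul_hp_ch, h1, h2]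
    | ch s l =>
      rcases eq_or_ne i t with rfl | h2
      · rcases eq_or_ne (endv i u) s with h1 | h1
        · simp [Nmul_ch_ch, Nmul_hp_ch, h1]
          rw [hv_append hx l, norm_bf_norm, bf_append _ hx l, norm_norm_append]
        · simp [Nmul_ch_ch, Nmul_hp_ch, h1]
      · rcases eq_or_ne (endv t u) s with h1 | h1 <;>
          simp [Nmul_ch_ch, Nmul_hp_ch, h1, h2]

lemma g1_assoc (i j : ι) (n : ℤ) (hij : 1 ≤ A i j) (x y : NN ι)
    (hx : GoodN x) (hy : GoodN y) :
    Nmul A B (.ch i [(j, n)]) (Nmul A B x y) = Nmul A B (Nmul A B (.ch i [(j, n)]) x) y := by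
  have hend : ∀ m : ℤ, endv i [(j, m)] = j := fun _ => rfl
  have hpen : ∀ m : ℤ, pen i [(j, m)] = i := fun _ => rfl
  have hAne : (A i j : ℤ) ≠ 0 := by positivity
  cases x with
  | zero => simp
  | one => simp
  | hp k r =>
    cases y with
    | zero => simp
    | one => simp
    | hp m t' =>
      rcases eq_or_ne j k with rfl | h2
      · rcases eq_or_ne j m with rfl | h1
        · simp [Nmul_hp_hp, Nmul_ch_hp, hend, hpen]
          push_cast
          ring
        · simp [Nmul_hp_hp, Nmul_ch_hp, hend, hpen, h1]
      · rcases eq_or_ne k m with rfl | h1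
        · simp [Nmul_hp_hp, Nmul_ch_hp, hend, h2]
        · simp [Nmul_hp_hp, Nmul_ch_hp, hend, h1, h2]
    | ch s l =>
      replace hy : l ≠ [] := hy
      rcases eq_or_ne j k with rfl | h2
      · rcases eq_or_ne j s with rfl | h1
        · simp [Nmul_hp_ch, Nmul_ch_hp, Nmul_ch_ch, hend, hpen, List.singleton_append]
          rw [norm_cons_norm A B i j n (bf_ne_nil _ hy), ← g_bump A B i j n hAne _ hy]
        · simp [Nmul_hp_ch, Nmul_ch_hp, Nmul_ch_ch, hend, hpen, h1]
      · rcases eq_or_ne k s with rfl | h1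
        · simp [Nmul_hp_ch, Nmul_ch_hp, Nmul_ch_ch, hend, h2]
        · simp [Nmul_hp_ch, Nmul_ch_hp, Nmul_ch_ch, hend, h1, h2]
  | ch t u =>
    replace hx : u ≠ [] := hx
    cases y with
    | zero => simp
    | one => simp
    | hp k r =>
      rcases eq_or_ne j t with rfl | h2
      · rcases eq_or_ne (endv j u) k with h1 | h1
        · simp [Nmul_ch_hp, Nmul_ch_ch, hend, hpen, h1, List.singleton_append,
            pen_cons i (j, n) hx]
          rw [norm_cons_norm A B i j n (bl_ne_nil _ hx), ← bl_cons _ (j, n) hx,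
            norm_bl, norm_bl, norm_norm]
        · simp [Nmul_ch_hp, Nmul_ch_ch, hend, h1, List.singleton_append]
      · rcases eq_or_ne (endv t u) k with h1 | h1 <;>
          simp [Nmul_ch_hp, Nmul_ch_ch, hend, h1, h2, List.singleton_append]
    | ch s l =>
      rcases eq_or_ne j t with rfl | h2
      · rcases eq_or_ne (endv j u) s with h1 | h1
        · simp [Nmul_ch_ch, hend, h1, List.singleton_append]
          rw [norm_cons_norm A B i j n (X := u ++ l) (by simp [hx]), norm_norm_append,
            List.cons_append]
        · simp [Nmul_ch_ch, hend, h1, List.singleton_append]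
      · rcases eq_or_ne (endv t u) s with h1 | h1 <;>
          simp [Nmul_ch_ch, hend, h1, h2, List.singleton_append]
lemma prop_ne (hE : ∀ i j, 1 ≤ A i j → B i j ≠ 0) :
    ∀ (t : List (ι × ℤ)) (j : ι) (n : ℤ) (δ : ℤ) (s : ι), validL A s ((j, n) :: t) →
      norm A B s (bf δ ((j, n) :: t)) = norm A B s ((j, n) :: t) → δ = 0 := by
  intro t
  induction t with
  | nil =>
    intro j n δ s hval hnorm
    simp [bf] at hnorm
    omega
  | cons e₂ r ih =>
    intro j n δ s hval hnorm
    obtain ⟨j₂, m⟩ := e₂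
    rw [bf_cons, norm_cons₂, norm_cons₂, List.cons.injEq] at hnorm
    obtain ⟨hhead, htail⟩ := hnorm
    have hBne : B j j₂ ≠ 0 := hE j j₂ hval.2.1
    set c₁ : ℤ := (n + δ) / (A s j : ℤ) * B j j₂ with hc₁
    set c₂ : ℤ := n / (A s j : ℤ) * B j j₂ with hc₂
    have htail' : norm A B j (bf (c₁ - c₂) ((j₂, m + c₂) :: r)) =
        norm A B j ((j₂, m + c₂) :: r) := by
      rw [bf_cons, show m + c₂ + (c₁ - c₂) = m + c₁ by ring]
      exact htail
    have hc : c₁ - c₂ = 0 := by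
      refine ih j₂ (m + c₂) (c₁ - c₂) j ?_ htail'
      exact ⟨hval.2.1, hval.2.2⟩
    have hdiv : (n + δ) / (A s j : ℤ) = n / (A s j : ℤ) := by
      have : ((n + δ) / (A s j : ℤ) - n / (A s j : ℤ)) * B j j₂ = 0 := by
        rw [sub_mul]; rw [hc₁, hc₂] at hc; linarith
      rcases mul_eq_zero.mp this with h | h
      · linarith
      · exact absurd h hBne
    have e1 := Int.mul_ediv_add_emod (n + δ) (A s j : ℤ)
    have e2 := Int.mul_ediv_add_emod n (A s j : ℤ)
    simp only [Prod.mk.injEq, true_and] at hhead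
    rw [hdiv] at e1
    rw [hhead] at e1
    linarith

lemma prop_diff (hE : ∀ i j, 1 ≤ A i j → B i j ≠ 0) {s : ι} {l : List (ι × ℤ)}
    (hl : l ≠ []) (hval : validL A s l) (d₁ d₂ : ℤ)
    (h : norm A B s (bf d₁ l) = norm A B s (bf d₂ l)) : d₁ = d₂ := by
  cases l with
  | nil => exact absurd rfl hl
  | cons e t =>
    obtain ⟨j, n⟩ := e
    have h' : norm A B s (bf (d₁ - d₂) (bf d₂ ((j, n) :: t))) =
        norm A B s (bf d₂ ((j, n) :: t)) := by
      rw [bf_bf, show d₂ + (d₁ - d₂) = d₁ by ring]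
      exact h
    have := prop_ne A B hE t j (n + d₂) (d₁ - d₂) s
      (by rw [← bf_cons]; exact (validL_bf A d₂ _).mpr hval) h'
    linarith

lemma norm_fix_head {s j : ι} {n : ℤ} {t : List (ι × ℤ)} (hA : 1 ≤ A s j) (ht : t ≠ [])
    (h : norm A B s ((j, n) :: t) = (j, n) :: t) :
    n % (A s j : ℤ) = n ∧ n / (A s j : ℤ) = 0 ∧ norm A B j t = t := by
  cases t with
  | nil => exact absurd rfl ht
  | cons e r =>
    rw [norm_cons₂, List.cons.injEq] at h
    obtain ⟨h1, h2⟩ := h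
    simp only [Prod.mk.injEq, true_and] at h1
    have hAne : (A s j : ℤ) ≠ 0 := by positivity
    have hdiv : n / (A s j : ℤ) = 0 := by
      have := Int.mul_ediv_add_emod n (A s j : ℤ)
      rw [h1] at this
      have h3 : (A s j : ℤ) * (n / (A s j : ℤ)) = 0 := by linarith
      rcases mul_eq_zero.mp h3 with h4 | h4
      · exact absurd h4 hAne
      · exact h4
    refine ⟨h1, hdiv, ?_⟩
    rw [hdiv] at h2
    simp only [zero_mul, add_zero] at h2
    convert h2 using 2 <;> simp

lemma pre_cancel (hE : ∀ i j, 1 ≤ A i j → B i j ≠ 0) :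
    ∀ (u u' : List (ι × ℤ)) (s : ι) (l : List (ι × ℤ)),
      u.map Prod.fst = u'.map Prod.fst → norm A B s u = u → norm A B s u' = u' →
      validL A s u → l ≠ [] → validL A (endv s u) l →
      norm A B s (u ++ l) = norm A B s (u' ++ l) → u = u' := by
  intro u
  induction u with
  | nil =>
    intro u' s l hmap _ _ _ _ _ _
    exact (List.map_eq_nil_iff.mp hmap.symm).symm
  | cons e u₂ ih =>
    intro u' s l hmap hnu hnu' hval hl hvl h
    obtain ⟨j, n⟩ := e
    cases u' with
    | nil => simp at hmap
    | cons e' u₂' =>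
      obtain ⟨j', n'⟩ := e'
      simp only [List.map_cons, List.cons.injEq] at hmap
      obtain ⟨heq, hmap₂⟩ := hmap
      subst heq
      have hAne : (A s j : ℤ) ≠ 0 := by
        have h1 : 1 ≤ A s j := hval.1
        positivity
      cases u₂ with
      | nil =>
        have hu₂' : u₂' = [] := List.map_eq_nil_iff.mp hmap₂.symm
        subst hu₂'
        cases l with
        | nil => exact absurd rfl hl
        | cons e₂ t =>
          obtain ⟨j₂, m⟩ := e₂
          simp only [List.singleton_append] at h
          rw [norm_cons₂, norm_cons₂, List.cons.injEq] at h
          obtain ⟨hhead, htail⟩ := h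
          simp only [Prod.mk.injEq, true_and] at hhead
          have hvl' : validL A j ((j₂, m) :: t) := by
            simpa [endv] using hvl
          have hBne : B j j₂ ≠ 0 := hE j j₂ hvl'.1
          have hdiff : n / (A s j : ℤ) * B j j₂ = n' / (A s j : ℤ) * B j j₂ := by
            apply prop_diff A B hE (List.cons_ne_nil _ _) hvl'
            · rw [bf_cons, bf_cons]
              exact htail
          have hdiv : n / (A s j : ℤ) = n' / (A s j : ℤ) :=
            mul_right_cancel₀ hBne hdiff
          have e1 := Int.mul_ediv_add_emod n (A s j : ℤ)
          have e2 := Int.mul_ediv_add_emod n' (A s j : ℤ)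
          have : n = n' := by rw [hdiv, hhead] at e1; linarith
          rw [this]
      | cons e₂ r =>
        have hu₂ne : (e₂ :: r : List (ι × ℤ)) ≠ [] := by simp
        cases u₂' with
        | nil => simp at hmap₂
        | cons e₂' r' =>
          obtain ⟨hmod, hdiv, hnorm₂⟩ := norm_fix_head A B hval.1 hu₂ne hnu
          obtain ⟨hmod', hdiv', hnorm₂'⟩ := norm_fix_head A B hval.1 (by simp) hnu'
          -- unfold h
          simp only [List.cons_append] at h
          rw [norm_cons A B s j n (by simp),
            norm_cons A B s j n' (by simp), hmod, hmod', hdiv, hdiv', zero_mul, zero_mul,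
            bf_zero, bf_zero, List.cons.injEq] at h
          obtain ⟨hhead, htail⟩ := h
          simp only [Prod.mk.injEq, true_and] at hhead
          have htl : e₂ :: r = e₂' :: r' := by
            apply ih (e₂' :: r') j l hmap₂ hnorm₂ hnorm₂' hval.2 hl _ htail
            simpa [endv] using hvl
          rw [hhead, htl]
lemma bl_inj (d : ℤ) {u u' : List (ι × ℤ)} (h : bl d u = bl d u') : u = u' := by
  have := congrArg (bl (-d)) h
  simpa [bl_bl] using this

def NInv : NN ι → Prop
  | .ch s l => l ≠ [] ∧ validL A s l ∧ norm A B s l = l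
  | _ => True

lemma nmul_cancel (hE : ∀ i j, 1 ≤ A i j → B i j ≠ 0) (x y z : NN ι)
    (hx : NInv A B x) (hy : NInv A B y) (hz : NInv A B z)
    (h : Nmul A B y x = Nmul A B z x) (hne : Nmul A B y x ≠ .zero) : y = z := by
  cases x with
  | zero => rw [Nmul_zero_right] at hne; exact absurd rfl hne
  | one => rw [Nmul_one_right, Nmul_one_right] at h; exact h
  | hp j m =>
    cases y with
    | zero => rw [Nmul_zero_left] at hne; exact absurd rfl hne
    | one =>
      rw [Nmul_one_left] at h hne
      cases z with
      | zero => simp at h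
      | one => rfl
      | hp i q =>
        rcases eq_or_ne i j with rfl | h'
        · simp [Nmul_hp_hp] at h
          omega
        · simp [Nmul_hp_hp, h'] at h
      | ch t u =>
        rcases eq_or_ne (endv t u) j with h' | h' <;> simp [Nmul_ch_hp, h'] at h
    | hp i p =>
      have hij : i = j := by
        rcases eq_or_ne i j with rfl | h'
        · rfl
        · simp [Nmul_hp_hp, h'] at hne
      subst hij
      cases z with
      | zero => simp [Nmul_hp_hp] at h
      | one => simp [Nmul_hp_hp] at h; omega
      | hp i' q =>
        rcases eq_or_ne i' i with rfl | h'
        · simp [Nmul_hp_hp] at h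
          rw [show p = q by omega]
        · simp [Nmul_hp_hp, h'] at h
      | ch t u =>
        rcases eq_or_ne (endv t u) i with h' | h' <;>
          simp [Nmul_hp_hp, Nmul_ch_hp, h'] at h
    | ch t u =>
      obtain ⟨hu_ne, hu_val, hu_norm⟩ := hy
      have het : endv t u = j := by
        rcases eq_or_ne (endv t u) j with h' | h'
        · exact h'
        · simp [Nmul_ch_hp, h'] at hne
      rw [Nmul_ch_hp, if_pos het] at h
      cases z with
      | zero => simp at h
      | one => rw [Nmul_one_left] at h; simp at h
      | hp i' q =>
        rcases eq_or_ne i' j with rfl | h'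
        · simp [Nmul_hp_hp] at h
        · simp [Nmul_hp_hp, h'] at h
      | ch t' u' =>
        obtain ⟨hu'_ne, hu'_val, hu'_norm⟩ := hz
        have het' : endv t' u' = j := by
          rcases eq_or_ne (endv t' u') j with h' | h'
          · exact h'
          · rw [Nmul_ch_hp, if_neg h'] at h; simp at h
        rw [Nmul_ch_hp, if_pos het'] at h
        simp only [NN.ch.injEq] at h
        obtain ⟨rfl, hlist⟩ := h
        have hmf : u.map Prod.fst = u'.map Prod.fst := by
          have := congrArg (List.map Prod.fst) hlist
          simpa [norm_map_fst, bl_map_fst] using this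
        have hpen : pen t u = pen t u' := pen_congr hmf
        rw [het, het', ← hpen, norm_bl, norm_bl, hu_norm, hu'_norm] at hlist
        rw [bl_inj _ hlist]
  | ch s l =>
    obtain ⟨hl_ne, hl_val, hl_norm⟩ := hx
    cases l with
    | nil => exact absurd rfl hl_ne
    | cons e₀ t₀ =>
    obtain ⟨j₁, n₁⟩ := e₀
    have hB1 : B s j₁ ≠ 0 := hE s j₁ hl_val.1
    cases y with
    | zero => rw [Nmul_zero_left] at hne; exact absurd rfl hne
    | one =>
      rw [Nmul_one_left] at h hne
      cases z with
      | zero => simp at h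
      | one => rfl
      | hp i q =>
        rcases eq_or_ne i s with rfl | h'
        · rw [Nmul_hp_ch, if_pos rfl] at h
          simp only [NN.ch.injEq, true_and] at h
          have hd : ((q : ℤ) + 1) * B i (hv ((j₁, n₁) :: t₀) i) = 0 := by
            apply prop_diff A B hE (List.cons_ne_nil _ _) hl_val
            rw [bf_zero, hl_norm, ← h]
          rw [hv_cons] at hd
          rcases mul_eq_zero.mp hd with h'' | h''
          · omega
          · exact absurd h'' hB1
        · simp [Nmul_hp_ch, h'] at h
      | ch t u =>
        obtain ⟨hu'_ne, hu'_val, hu'_norm⟩ := hz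
        rcases eq_or_ne (endv t u) s with h' | h' <;> simp [Nmul_ch_ch, h'] at h
        obtain ⟨rfl, hlist⟩ := h
        have := congrArg List.length hlist
        rw [norm_length, List.length_append] at this
        have hu0 : u.length = 0 := by omega
        exact absurd (List.length_eq_zero_iff.mp hu0) hu'_ne
    | hp i p =>
      have his : i = s := by
        rcases eq_or_ne i s with rfl | h'
        · rfl
        · simp [Nmul_hp_ch, h'] at hne
      subst his
      rw [Nmul_hp_ch, if_pos rfl] at h
      cases z with
      | zero => simp at h
      | one =>
        rw [Nmul_one_left] at h
        simp only [NN.ch.injEq, true_and] at h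
        have hd : ((p : ℤ) + 1) * B i (hv ((j₁, n₁) :: t₀) i) = 0 := by
          apply prop_diff A B hE (List.cons_ne_nil _ _) hl_val
          rw [bf_zero, hl_norm, h]
        rw [hv_cons] at hd
        rcases mul_eq_zero.mp hd with h'' | h''
        · omega
        · exact absurd h'' hB1
      | hp i' q =>
        have his' : i' = i := by
          rcases eq_or_ne i' i with rfl | h'
          · rfl
          · rw [Nmul_hp_ch, if_neg h'] at h; simp at h
        subst his'
        rw [Nmul_hp_ch, if_pos rfl] at h
        simp only [NN.ch.injEq, true_and] at h
        have hd := prop_diff A B hE (List.cons_ne_nil _ _) hl_val _ _ h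
        rw [hv_cons] at hd
        have hpq : (p : ℤ) = q := by
          have := mul_right_cancel₀ hB1 hd
          linarith
        rw [show p = q from by exact_mod_cast hpq]
      | ch t u =>
        obtain ⟨hu'_ne, hu'_val, hu'_norm⟩ := hz
        rcases eq_or_ne (endv t u) i with h' | h' <;> simp [Nmul_ch_ch, h'] at h
        obtain ⟨rfl, hlist⟩ := h
        have := congrArg List.length hlist
        rw [norm_length, norm_length, List.length_append] at this
        simp only [List.length_cons] at this
        have hu0 : u.length = 0 := by omega
        exact absurd (List.length_eq_zero_iff.mp hu0) hu'_ne
    | ch t u =>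
      obtain ⟨hu_ne, hu_val, hu_norm⟩ := hy
      have het : endv t u = s := by
        rcases eq_or_ne (endv t u) s with h' | h'
        · exact h'
        · simp [Nmul_ch_ch, h'] at hne
      rw [Nmul_ch_ch, if_pos het] at h
      cases z with
      | zero => simp at h
      | one =>
        rw [Nmul_one_left] at h
        simp only [NN.ch.injEq] at h
        obtain ⟨rfl, hlist⟩ := h
        have := congrArg List.length hlist
        rw [norm_length, List.length_append] at this
        have hu0 : u.length = 0 := by omega
        exact absurd (List.length_eq_zero_iff.mp hu0) hu_ne
      | hp i' q =>
        have his' : i' = s := by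
          rcases eq_or_ne i' s with rfl | h'
          · rfl
          · rw [Nmul_hp_ch, if_neg h'] at h; simp at h
        subst his'
        rw [Nmul_hp_ch, if_pos rfl] at h
        simp only [NN.ch.injEq] at h
        obtain ⟨rfl, hlist⟩ := h
        have := congrArg List.length hlist
        rw [norm_length, norm_length, List.length_append, bf_length] at this
        have hu0 : u.length = 0 := by omega
        exact absurd (List.length_eq_zero_iff.mp hu0) hu_ne
      | ch t' u' =>
        obtain ⟨hu'_ne, hu'_val, hu'_norm⟩ := hz
        have het' : endv t' u' = s := by
          rcases eq_or_ne (endv t' u') s with h' | h'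
          · exact h'
          · rw [Nmul_ch_ch, if_neg h'] at h; simp at h
        rw [Nmul_ch_ch, if_pos het'] at h
        simp only [NN.ch.injEq] at h
        obtain ⟨rfl, hlist⟩ := h
        have hlen : u.length = u'.length := by
          have := congrArg List.length hlist
          rw [norm_length, norm_length, List.length_append, List.length_append] at this
          omega
        have hmf : u.map Prod.fst = u'.map Prod.fst := by
          have := congrArg (List.map Prod.fst) hlist
          rw [norm_map_fst, norm_map_fst, List.map_append, List.map_append] at this
          exact (List.append_inj this (by simp [hlen])).1
        have := pre_cancel A B hE u u' t ((j₁, n₁) :: t₀) hmf hu_norm hu'_norm hu_val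
          (List.cons_ne_nil _ _) (by rw [het]; exact hl_val) hlist
        rw [this]
/-- Image of a letter in the normal-form carrier. -/
def letterN : Letter ι A → NN ι
  | .z => .zero
  | .h i => .hp i 0
  | .g i j _ n => .ch i [(j, n)]

/-- The normal form of a word. -/
def phiL : List (Letter ι A) → NN ι
  | [] => .one
  | ℓ :: t => Nmul A B (letterN A ℓ) (phiL t)

def phiF (w : FreeMonoid (Letter ι A)) : NN ι := phiL A B (FreeMonoid.toList w)

lemma NInv_mul_letter (ℓ : Letter ι A) (x : NN ι) (hx : NInv A B x) :
    NInv A B (Nmul A B (letterN A ℓ) x) := by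
  cases ℓ with
  | z => trivial
  | h i =>
    cases x with
    | zero => trivial
    | one => trivial
    | hp j q =>
      simp only [letterN, Nmul_hp_hp]
      split <;> trivial
    | ch s l =>
      obtain ⟨hne, hval, hnorm⟩ := hx
      simp only [letterN, Nmul_hp_ch]
      split
      · exact ⟨norm_ne_nil A B s (bf_ne_nil _ hne), (validL_norm A B _).mpr
          ((validL_bf A _ _).mpr hval), norm_norm A B _ _⟩
      · trivial
  | g i j hij n =>
    cases x with
    | zero => trivial
    | one => exact ⟨by simp, by simp [hij], by simp⟩
    | hp k r =>
      simp only [letterN, Nmul_ch_hp]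
      split
      · exact ⟨by simp, by simp [hij], by simp⟩
      · trivial
    | ch s l =>
      obtain ⟨hne, hval, hnorm⟩ := hx
      simp only [letterN, Nmul_ch_ch]
      split
      · next heq =>
        have : endv i [(j, n)] = j := rfl
        rw [this] at heq
        subst heq
        refine ⟨norm_ne_nil A B _ (by simp), (validL_norm A B _).mpr ?_, norm_norm A B _ _⟩
        rw [List.singleton_append]
        exact ⟨hij, hval⟩
      · trivial

lemma NInv_phiL (w : List (Letter ι A)) : NInv A B (phiL A B w) := by
  induction w with
  | nil => trivial
  | cons ℓ t ih => exact NInv_mul_letter A B ℓ _ ih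

lemma GoodN_of_NInv {x : NN ι} (hx : NInv A B x) : GoodN x := by
  cases x with
  | zero => trivial
  | one => trivial
  | hp i p => trivial
  | ch s l => exact hx.1

lemma letter_assoc (ℓ : Letter ι A) (x y : NN ι) (hx : GoodN x) (hy : GoodN y) :
    Nmul A B (letterN A ℓ) (Nmul A B x y) = Nmul A B (Nmul A B (letterN A ℓ) x) y := by
  cases ℓ with
  | z => simp [letterN]
  | h i => exact hp_assoc A B i 0 x y hx hy
  | g i j hij n => exact g1_assoc A B i j n hij x y hx hy

lemma phiL_append (u v : List (Letter ι A)) :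
    phiL A B (u ++ v) = Nmul A B (phiL A B u) (phiL A B v) := by
  induction u with
  | nil => simp [phiL]
  | cons ℓ t ih =>
    show Nmul A B (letterN A ℓ) (phiL A B (t ++ v)) =
      Nmul A B (Nmul A B (letterN A ℓ) (phiL A B t)) (phiL A B v)
    rw [ih]
    exact letter_assoc A B ℓ _ _ (GoodN_of_NInv A B (NInv_phiL A B t))
      (GoodN_of_NInv A B (NInv_phiL A B v))

lemma phiF_mul (u v : FreeMonoid (Letter ι A)) :
    phiF A B (u * v) = Nmul A B (phiF A B u) (phiF A B v) := by
  simp only [phiF, FreeMonoid.toList_mul]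
  exact phiL_append A B _ _

lemma katrel_phi : ∀ u v, KatRel ι A B u v → phiF A B u = phiF A B v := by
  intro u v h
  cases h with
  | zl w => simp [phiF, phiF_mul, phiL, letterN]
  | zr w => simp [phiF, phiF_mul, phiL, letterN]
  | gh i j hij n =>
    simp [phiF, phiL, letterN, Nmul_ch_hp, endv, pen, bl, norm_single]
  | hg i j hij n =>
    simp [phiF, phiL, letterN, Nmul_hp_ch, hv, bf, norm_single]
  | hh i j hne => simp [phiF, phiL, letterN, Nmul_hp_hp, hne]
  | hg' i i' j hij n hne => simp [phiF, phiL, letterN, Nmul_hp_ch, hne]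
  | gh' i j k hij n hne => simp [phiF, phiL, letterN, Nmul_ch_hp, endv, hne]
  | gg i j j' l hij hjl n m hne => simp [phiF, phiL, letterN, Nmul_ch_ch, endv, hne]

/-- phi as a congruence-compatible map -/
def phiCon : Con (FreeMonoid (Letter ι A)) where
  r := fun u v => phiF A B u = phiF A B v
  iseqv := ⟨fun _ => rfl, Eq.symm, Eq.trans⟩
  mul' := fun {w x y z} h1 h2 => by
    show phiF A B (w * y) = phiF A B (x * z)
    rw [phiF_mul, phiF_mul, (h1 : phiF A B w = phiF A B x), (h2 : phiF A B y = phiF A B z)]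

lemma phi_congr {u v : FreeMonoid (Letter ι A)} (h : KatCon ι A B u v) :
    phiF A B u = phiF A B v :=
  (Con.conGen_le (c := phiCon A B)).mpr (fun x y hxy => katrel_phi A B x y hxy) h
/-- The word associated to a chain. -/
def wordOf : ι → List (ι × ℤ) → FreeMonoid (Letter ι A)
  | _, [] => 1
  | s, (j, n) :: t =>
      (if h : 1 ≤ A s j then FreeMonoid.of (Letter.g s j h n)
        else FreeMonoid.of Letter.z) * wordOf j t

/-- Section from normal forms back to the quotient monoid. -/
def sigmaN : NN ι → KatM ι A B
  | .zero => zeroM ι A B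
  | .one => 1
  | .hp i p => (KatQ ι A B (FreeMonoid.of (Letter.h i))) ^ (p + 1)
  | .ch s l => KatQ ι A B (wordOf A s l)

lemma rel_q {u v : FreeMonoid (Letter ι A)} (h : KatRel ι A B u v) :
    KatQ ι A B u = KatQ ι A B v :=
  (Con.eq _).mpr (ConGen.Rel.of u v h)

lemma q_zero_mul (w : FreeMonoid (Letter ι A)) :
    zeroM ι A B * KatQ ι A B w = zeroM ι A B := by
  induction w using FreeMonoid.recOn with
  | one => exact mul_one _
  | of_mul x xs ih =>
    rw [map_mul, ← mul_assoc]
    have : zeroM ι A B * KatQ ι A B (FreeMonoid.of x) = zeroM ι A B := by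
      rw [zeroM, ← map_mul]
      exact rel_q A B (KatRel.zl x)
    rw [this, ih]

lemma q_mul_zero (w : FreeMonoid (Letter ι A)) :
    KatQ ι A B w * zeroM ι A B = zeroM ι A B := by
  induction w using FreeMonoid.recOn with
  | one => exact one_mul _
  | of_mul x xs ih =>
    rw [map_mul, mul_assoc, ih]
    rw [zeroM, ← map_mul]
    exact rel_q A B (KatRel.zr x)

lemma zeroM_mul (x : KatM ι A B) : zeroM ι A B * x = zeroM ι A B := by
  obtain ⟨w, rfl⟩ := Con.mk'_surjective (c := KatCon ι A B) x
  exact q_zero_mul A B w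

lemma mul_zeroM (x : KatM ι A B) : x * zeroM ι A B = zeroM ι A B := by
  obtain ⟨w, rfl⟩ := Con.mk'_surjective (c := KatCon ι A B) x
  exact q_mul_zero A B w

lemma hpow_g (i j : ι) (hij : 1 ≤ A i j) (n : ℤ) (m : ℕ) :
    (KatQ ι A B (FreeMonoid.of (Letter.h i))) ^ m *
      KatQ ι A B (FreeMonoid.of (Letter.g i j hij n)) =
      KatQ ι A B (FreeMonoid.of (Letter.g i j hij (n + m * B i j))) := by
  induction m generalizing n with
  | zero => simp
  | succ k ih =>
    rw [pow_succ, mul_assoc, ← map_mul, rel_q A B (KatRel.hg i j hij n), ih,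
      show n + B i j + (k : ℤ) * B i j = n + ((k : ℕ) + 1 : ℕ) * B i j by push_cast; ring]

lemma g_hpow (i j : ι) (hij : 1 ≤ A i j) (n : ℤ) (m : ℕ) :
    KatQ ι A B (FreeMonoid.of (Letter.g i j hij n)) *
      (KatQ ι A B (FreeMonoid.of (Letter.h j))) ^ m =
      KatQ ι A B (FreeMonoid.of (Letter.g i j hij (n + m * A i j))) := by
  induction m generalizing n with
  | zero => simp
  | succ k ih =>
    rw [pow_succ', ← mul_assoc, ← map_mul, rel_q A B (KatRel.gh i j hij n), ih,
      show n + (A i j : ℤ) + (k : ℤ) * A i j = n + ((k : ℕ) + 1 : ℕ) * A i j by push_cast; ring]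

lemma move1_q (s j k : ι) (h1 : 1 ≤ A s j) (h2 : 1 ≤ A j k) (a b : ℤ) :
    KatQ ι A B (FreeMonoid.of (Letter.g s j h1 (a - A s j))) *
      KatQ ι A B (FreeMonoid.of (Letter.g j k h2 (b + B j k))) =
      KatQ ι A B (FreeMonoid.of (Letter.g s j h1 a)) *
      KatQ ι A B (FreeMonoid.of (Letter.g j k h2 b)) := by
  rw [← rel_q A B (KatRel.hg j k h2 b), map_mul, ← mul_assoc, ← map_mul,
    rel_q A B (KatRel.gh s j h1 (a - A s j)),
    show a - (A s j : ℤ) + A s j = a by ring]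

lemma move_q (s j k : ι) (h1 : 1 ≤ A s j) (h2 : 1 ≤ A j k) (n m : ℤ) (q : ℤ) :
    KatQ ι A B (FreeMonoid.of (Letter.g s j h1 (n - q * A s j))) *
      KatQ ι A B (FreeMonoid.of (Letter.g j k h2 (m + q * B j k))) =
      KatQ ι A B (FreeMonoid.of (Letter.g s j h1 n)) *
      KatQ ι A B (FreeMonoid.of (Letter.g j k h2 m)) := by
  induction q using Int.induction_on with
  | zero => simp
  | succ q ih =>
    have := move1_q A B s j k h1 h2 (n - q * A s j) (m + q * B j k)
    rw [show n - (q : ℤ) * A s j - A s j = n - ((q : ℤ) + 1) * A s j by ring,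
      show m + (q : ℤ) * B j k + B j k = m + ((q : ℤ) + 1) * B j k by ring] at this
    rw [this, ih]
  | pred q ih =>
    rw [show n - (-(q:ℤ) - 1) * (A s j : ℤ) = n + ((q:ℤ) + 1) * A s j by ring,
        show m + (-(q:ℤ) - 1) * B j k = m - ((q:ℤ) + 1) * B j k by ring,
        ← move1_q A B s j k h1 h2 (n + ((q:ℤ) + 1) * A s j) (m - ((q:ℤ) + 1) * B j k),
        show n + ((q:ℤ) + 1) * (A s j : ℤ) - A s j = n - -(q:ℤ) * A s j by ring,
        show m - ((q:ℤ) + 1) * B j k + B j k = m + -(q:ℤ) * B j k by ring, ih]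

lemma wordOf_norm {s : ι} {l : List (ι × ℤ)} (hval : validL A s l) :
    KatQ ι A B (wordOf A s (norm A B s l)) = KatQ ι A B (wordOf A s l) := by
  induction s, l using norm.induct A B with
  | case1 s => simp
  | case2 s e => simp
  | case3 s j n e t ih =>
    obtain ⟨j₂, m⟩ := e
    obtain ⟨hA1, hA2, hvt⟩ : 1 ≤ A s j ∧ 1 ≤ A j j₂ ∧ validL A j₂ t := by
      exact ⟨hval.1, hval.2.1, hval.2.2⟩
    have hAne : (A s j : ℤ) ≠ 0 := by positivity
    rw [norm_cons₂]
    show KatQ ι A B ((if h : 1 ≤ A s j then FreeMonoid.of (Letter.g s j h (n % (A s j : ℤ)))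
      else FreeMonoid.of Letter.z) * wordOf A j (norm A B j ((j₂, m + n / (A s j:ℤ) * B j j₂) :: t))) = _
    rw [dif_pos hA1, map_mul, ih ⟨hA2, hvt⟩]
    show _ = KatQ ι A B ((if h : 1 ≤ A s j then FreeMonoid.of (Letter.g s j h n)
      else FreeMonoid.of Letter.z) * wordOf A j ((j₂, m) :: t))
    rw [dif_pos hA1, map_mul]
    show KatQ ι A B (FreeMonoid.of (Letter.g s j hA1 (n % (A s j : ℤ)))) *
      KatQ ι A B (wordOf A j ((j₂, m + n / (A s j:ℤ) * B j j₂) :: t)) = _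
    have hw1 : wordOf A j ((j₂, m + n / (A s j:ℤ) * B j j₂) :: t) =
        FreeMonoid.of (Letter.g j j₂ hA2 (m + n / (A s j:ℤ) * B j j₂)) * wordOf A j₂ t := by
      show (if h : 1 ≤ A j j₂ then _ else _) * _ = _
      rw [dif_pos hA2]
    have hw2 : wordOf A j ((j₂, m) :: t) =
        FreeMonoid.of (Letter.g j j₂ hA2 m) * wordOf A j₂ t := by
      show (if h : 1 ≤ A j j₂ then _ else _) * _ = _
      rw [dif_pos hA2]
    rw [hw1, hw2, map_mul, map_mul, ← mul_assoc, ← mul_assoc,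
      show n % (A s j : ℤ) = n - (n / (A s j : ℤ)) * A s j by
        rw [Int.emod_def]; ring,
      move_q A B s j j₂ hA1 hA2 n m (n / (A s j : ℤ))]
@[simp] lemma sigmaN_zero : sigmaN A B (.zero : NN ι) = zeroM ι A B := rfl
@[simp] lemma sigmaN_one : sigmaN A B (.one : NN ι) = 1 := rfl
lemma sigmaN_hp (i : ι) (p : ℕ) :
    sigmaN A B (.hp i p) = (KatQ ι A B (FreeMonoid.of (Letter.h i))) ^ (p + 1) := rfl
lemma sigmaN_ch (s : ι) (l : List (ι × ℤ)) :
    sigmaN A B (.ch s l) = KatQ ι A B (wordOf A s l) := rfl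

lemma wordOf_cons (s j : ι) (n : ℤ) (t : List (ι × ℤ)) :
    wordOf A s ((j, n) :: t) =
      (if h : 1 ≤ A s j then FreeMonoid.of (Letter.g s j h n)
        else FreeMonoid.of Letter.z) * wordOf A j t := by
  rw [wordOf]

lemma sigma_mul_letter (ℓ : Letter ι A) (x : NN ι) (hx : NInv A B x) :
    sigmaN A B (Nmul A B (letterN A ℓ) x) =
      KatQ ι A B (FreeMonoid.of ℓ) * sigmaN A B x := by
  cases ℓ with
  | z =>
    show sigmaN A B .zero = _
    rw [sigmaN_zero]
    exact (zeroM_mul A B _).symm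
  | h i =>
    cases x with
    | zero =>
      show sigmaN A B .zero = _
      rw [sigmaN_zero]
      exact (mul_zeroM A B _).symm
    | one =>
      show sigmaN A B (.hp i 0) = _
      rw [sigmaN_hp, sigmaN_one, pow_one, mul_one]
    | hp j q =>
      rcases eq_or_ne i j with rfl | hne
      · show sigmaN A B (Nmul A B (.hp i 0) (.hp i q)) = _
        rw [Nmul_hp_hp, if_pos rfl, sigmaN_hp, sigmaN_hp, ← pow_succ']
        congr 1
        omega
      · show sigmaN A B (Nmul A B (.hp i 0) (.hp j q)) = _
        rw [Nmul_hp_hp, if_neg hne, sigmaN_zero, sigmaN_hp, pow_succ', ← mul_assoc,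
          ← map_mul, rel_q A B (KatRel.hh i j hne)]
        all_goals exact (q_zero_mul A B _).symm
    | ch s l =>
      obtain ⟨hlne, hval, hnorm⟩ := hx
      cases l with
      | nil => exact absurd rfl hlne
      | cons e t =>
        obtain ⟨j₁, n₁⟩ := e
        rcases eq_or_ne i s with rfl | hne
        · show sigmaN A B (Nmul A B (.hp i 0) (.ch i ((j₁, n₁) :: t))) = _
          rw [Nmul_hp_ch, if_pos rfl, sigmaN_ch, sigmaN_ch,
            wordOf_norm A B ((validL_bf A _ _).mpr hval), hv_cons, bf_cons,
            wordOf_cons, wordOf_cons, dif_pos hval.1, dif_pos hval.1, map_mul, map_mul,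
            ← mul_assoc,
            show KatQ ι A B (FreeMonoid.of (Letter.h i)) *
                KatQ ι A B (FreeMonoid.of (Letter.g i j₁ hval.1 n₁)) =
                KatQ ι A B (FreeMonoid.of (Letter.g i j₁ hval.1 (n₁ + B i j₁))) from by
              rw [← map_mul]; exact rel_q A B (KatRel.hg i j₁ hval.1 n₁)]
          congr 3
          all_goals (push_cast; try ring)
        · show sigmaN A B (Nmul A B (.hp i 0) (.ch s ((j₁, n₁) :: t))) = _
          rw [Nmul_hp_ch, if_neg hne, sigmaN_zero, sigmaN_ch, wordOf_cons,
            dif_pos hval.1, map_mul, ← mul_assoc, ← map_mul,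
            rel_q A B (KatRel.hg' i s j₁ hval.1 n₁ hne)]
          all_goals exact (q_zero_mul A B _).symm
  | g i j hij n =>
    have hend : ∀ m : ℤ, endv i [(j, m)] = j := fun _ => rfl
    cases x with
    | zero =>
      show sigmaN A B .zero = _
      rw [sigmaN_zero]
      exact (mul_zeroM A B _).symm
    | one =>
      show sigmaN A B (.ch i [(j, n)]) = _
      rw [sigmaN_ch, sigmaN_one, wordOf_cons, dif_pos hij, mul_one]
      show KatQ ι A B (FreeMonoid.of (Letter.g i j hij n) * 1) = _
      rw [mul_one]
    | hp k r =>
      rcases eq_or_ne j k with rfl | hne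
      · show sigmaN A B (Nmul A B (.ch i [(j, n)]) (.hp j r)) = _
        rw [Nmul_ch_hp, if_pos (hend n), sigmaN_ch, sigmaN_hp, hend n]
        have hpen : pen i [(j, n)] = i := rfl
        rw [hpen, bl_single, norm_single, wordOf_cons, dif_pos hij,
          g_hpow A B i j hij n (r + 1)]
        show KatQ ι A B (FreeMonoid.of (Letter.g i j hij (n + ((r:ℤ) + 1) * A i j)) * 1) = _
        rw [mul_one]
        congr 2
        all_goals (push_cast; try ring)
      · show sigmaN A B (Nmul A B (.ch i [(j, n)]) (.hp k r)) = _
        rw [Nmul_ch_hp, if_neg (by rw [hend n]; exact hne), sigmaN_zero, sigmaN_hp,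
          pow_succ', ← mul_assoc, ← map_mul, rel_q A B (KatRel.gh' i j k hij n hne)]
        all_goals exact (q_zero_mul A B _).symm
    | ch s l =>
      obtain ⟨hlne, hval, hnorm⟩ := hx
      cases l with
      | nil => exact absurd rfl hlne
      | cons e t =>
        obtain ⟨j₁, n₁⟩ := e
        rcases eq_or_ne j s with rfl | hne
        · show sigmaN A B (Nmul A B (.ch i [(j, n)]) (.ch j ((j₁, n₁) :: t))) = _
          rw [Nmul_ch_ch, if_pos (hend n), sigmaN_ch, sigmaN_ch, List.singleton_append,
            wordOf_norm A B (by exact ⟨hij, hval⟩), wordOf_cons, dif_pos hij, map_mul]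
        · show sigmaN A B (Nmul A B (.ch i [(j, n)]) (.ch s ((j₁, n₁) :: t))) = _
          rw [Nmul_ch_ch, if_neg (by rw [hend n]; exact hne), sigmaN_zero, sigmaN_ch,
            wordOf_cons, dif_pos hval.1, map_mul, ← mul_assoc, ← map_mul,
            rel_q A B (KatRel.gg i j s j₁ hij hval.1 n n₁ hne)]
          all_goals exact (q_zero_mul A B _).symm

lemma phiF_of_mul (x : Letter ι A) (xs : FreeMonoid (Letter ι A)) :
    phiF A B (FreeMonoid.of x * xs) = Nmul A B (letterN A x) (phiF A B xs) := rfl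

lemma NInv_phiF (w : FreeMonoid (Letter ι A)) : NInv A B (phiF A B w) :=
  NInv_phiL A B _

lemma sigma_phiF (w : FreeMonoid (Letter ι A)) :
    sigmaN A B (phiF A B w) = KatQ ι A B w := by
  induction w using FreeMonoid.recOn with
  | one =>
    show sigmaN A B (.one : NN ι) = _
    rw [sigmaN_one, map_one]
  | of_mul x xs ih =>
    rw [phiF_of_mul, sigma_mul_letter A B x _ (NInv_phiF A B xs), ih, map_mul]
end KatAux

open KatAux in
/-- Every element of `Λ_{A,B}` is epic if and only if `B` satisfies Condition (E):
`B i j = 0` exactly when `A i j = 0`. -/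
theorem every_element_epic_iff_condE (ι : Type) [Countable ι] [Nonempty ι]
    (A : ι → ι → ℕ) (B : ι → ι → ℤ)
    (hfin : ∀ i, {j | 1 ≤ A i j}.Finite) (hrow : ∀ i, ∃ j, 1 ≤ A i j)
    (hB0 : ∀ i j, A i j = 0 → B i j = 0) :
    (∀ a b c : KatM ι A B, b * a = c * a → b * a ≠ zeroM ι A B → b = c) ↔
      (∀ i j, B i j = 0 ↔ A i j = 0) := by
  letI : DecidableEq ι := Classical.decEq ι
  constructor
  · intro hepic i j
    refine ⟨?_, hB0 i j⟩
    intro hB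
    by_contra hA
    have hij : 1 ≤ A i j := Nat.one_le_iff_ne_zero.mpr hA
    have key : KatQ ι A B (FreeMonoid.of (Letter.h i)) *
        KatQ ι A B (FreeMonoid.of (Letter.g i j hij 0)) =
        1 * KatQ ι A B (FreeMonoid.of (Letter.g i j hij 0)) := by
      rw [one_mul, ← map_mul, rel_q A B (KatRel.hg i j hij 0), hB, add_zero]
    have hnz : KatQ ι A B (FreeMonoid.of (Letter.h i)) *
        KatQ ι A B (FreeMonoid.of (Letter.g i j hij 0)) ≠ zeroM ι A B := by
      intro h0
      rw [← map_mul] at h0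
      have hcon : KatCon ι A B
          (FreeMonoid.of (Letter.h i) * FreeMonoid.of (Letter.g i j hij 0))
          (FreeMonoid.of Letter.z) := (Con.eq _).mp h0
      have hphi := phi_congr A B hcon
      simp [phiF, phiL, letterN, FreeMonoid.toList_mul, FreeMonoid.toList_of,
        Nmul_hp_ch, hv_cons, bf_cons, norm_single] at hphi
    have heq := hepic (KatQ ι A B (FreeMonoid.of (Letter.g i j hij 0)))
      (KatQ ι A B (FreeMonoid.of (Letter.h i))) 1 key hnz
    rw [← map_one (KatQ ι A B)] at heq
    have hcon2 : KatCon ι A B (FreeMonoid.of (Letter.h i)) 1 := (Con.eq _).mp heq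
    have hphi2 := phi_congr A B hcon2
    simp [phiF, phiL, letterN, FreeMonoid.toList_of, FreeMonoid.toList_one] at hphi2
  · intro hE a b c hbc hne
    have hE' : ∀ i j, 1 ≤ A i j → B i j ≠ 0 := by
      intro i j h hBz
      have := (hE i j).mp hBz
      omega
    obtain ⟨wa, rfl⟩ := Con.mk'_surjective (c := KatCon ι A B) a
    obtain ⟨wb, rfl⟩ := Con.mk'_surjective (c := KatCon ι A B) b
    obtain ⟨wc, rfl⟩ := Con.mk'_surjective (c := KatCon ι A B) c
    have hbc' : KatQ ι A B (wb * wa) = KatQ ι A B (wc * wa) := by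
      rw [map_mul, map_mul]; exact hbc
    have hphi := phi_congr A B ((Con.eq _).mp hbc')
    rw [phiF_mul, phiF_mul] at hphi
    have hnz : Nmul A B (phiF A B wb) (phiF A B wa) ≠ NN.zero := by
      intro h0
      apply hne
      have hs := sigma_phiF A B (wb * wa)
      rw [phiF_mul, h0, sigmaN_zero] at hs
      show (KatCon ι A B).mk' wb * (KatCon ι A B).mk' wa = zeroM ι A B
      rw [← map_mul]
      exact hs.symm
    have hcan := nmul_cancel A B hE' (phiF A B wa) (phiF A B wb) (phiF A B wc)
      (NInv_phiF A B wa) (NInv_phiF A B wb) (NInv_phiF A B wc) hphi hnz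
    have h1 := sigma_phiF A B wb
    have h2 := sigma_phiF A B wc
    rw [hcan] at h1
    exact h1.symm.trans h2
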